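/- arXiv:1806.00917 — 4 statements merged into one kernel-verified Lean document; each statement's English description precedes it below -/
import Mathlib

section
/- For every edge-state vector X : E → Bool, there exists a vertex assignment S : V → Bool such that (X, S) satisfies ψ if and only if X lies in the failure domain Ω_f, i.e., some pair of terminals of K is not X-connected. -/
/-- One step along an operational edge: `a` and `b` are the two endpoints of some
edge `e` with `X e = true`. -/
def edgeStep {V E : Type*} (uE vE : E → V) (X : E → Bool) (a b : V) : Prop :=
  ∃ e : E, X e = true ∧ ((uE e = a ∧ vE e = b) ∨ (uE e = b ∧ vE e = a))

/-- `a` and `b` are `X`-connected: reflexive-transitive closure of `edgeStep`. -/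
def xConnected {V E : Type*} (uE vE : E → V) (X : E → Bool) (a b : V) : Prop :=
  Relation.ReflTransGen (edgeStep uE vE X) a b

/-- The state `X` is safe (`Φ(X) = 1`): every pair of terminals is `X`-connected. -/
def safe {V E : Type*} (uE vE : E → V) (K : Finset V) (X : E → Bool) : Prop :=
  ∀ a ∈ K, ∀ b ∈ K, xConnected uE vE X a b

/-- `(X, S)` satisfies the formula `ψ`. -/
def satPsi {V E : Type*} (uE vE : E → V) (K : Finset V) (X : E → Bool) (S : V → Bool) : Prop :=
  (∃ j ∈ K, S j = true) ∧ (∃ k ∈ K, S k = false) ∧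
    ∀ e : E, ((S (uE e) = true ∧ X e = true) → S (vE e) = true) ∧
      ((S (vE e) = true ∧ X e = true) → S (uE e) = true)

/-!
A vertex set closed under operational edges is a union of `X`-components. So `ψ` asks for a
union of components containing one terminal but not another, which exists exactly when two
terminals lie in different components: take the component of one of them.
-/

section EdgeClosed

variable {V E : Type*} (uE vE : E → V) (X : E → Bool)

/-- The edge clause of `ψ`. -/
def IsEdgeClosed (S : V → Bool) : Prop :=
  ∀ e : E, ((S (uE e) = true ∧ X e = true) → S (vE e) = true) ∧
    ((S (vE e) = true ∧ X e = true) → S (uE e) = true)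

variable {uE vE X}

theorem IsEdgeClosed.apply_eq_true_of_xConnected {S : V → Bool} (hS : IsEdgeClosed uE vE X S)
    {a b : V} (hab : xConnected uE vE X a b) (ha : S a = true) : S b = true := by
  induction hab with
  | refl => exact ha
  | tail _ hstep ih =>
    obtain ⟨e, hXe, ⟨rfl, rfl⟩ | ⟨rfl, rfl⟩⟩ := hstep
    · exact (hS e).1 ⟨ih, hXe⟩
    · exact (hS e).2 ⟨ih, hXe⟩

variable (uE vE X)

open Classical in
theorem isEdgeClosed_xConnected (a : V) :
    IsEdgeClosed uE vE X fun v => decide (xConnected uE vE X a v) := by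
  intro e
  simp only [decide_eq_true_eq]
  exact ⟨fun ⟨hu, hXe⟩ => hu.tail ⟨e, hXe, .inl ⟨rfl, rfl⟩⟩,
    fun ⟨hv, hXe⟩ => hv.tail ⟨e, hXe, .inr ⟨rfl, rfl⟩⟩⟩

end EdgeClosed

theorem stmt0_general {V E : Type*} (uE vE : E → V) (K : Finset V)
    (X : E → Bool) :
    (∃ S : V → Bool, satPsi uE vE K X S) ↔ ¬ safe uE vE K X := by
  classical
  constructor
  · rintro ⟨S, ⟨j, hj, hSj⟩, ⟨k, hk, hSk⟩, hS⟩ hsafe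
    have hSk' : S k = true := IsEdgeClosed.apply_eq_true_of_xConnected hS (hsafe j hj k hk) hSj
    simp [hSk'] at hSk
  · intro hunsafe
    obtain ⟨a, ha, b, hb, hab⟩ : ∃ a ∈ K, ∃ b ∈ K, ¬ xConnected uE vE X a b := by
      simpa [safe] using hunsafe
    exact ⟨fun v => decide (xConnected uE vE X a v), ⟨a, ha, by simpa using .refl⟩,
      ⟨b, hb, by simpa using hab⟩, isEdgeClosed_xConnected uE vE X a⟩

/-- for every edge-state vector `X`, there is a vertex assignment `S`
with `(X, S)` satisfying `ψ` iff `X` lies in the failure domain, i.e. `X` is unsafe. -/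
theorem stmt0 {V E : Type*} [Fintype V] [Fintype E] (uE vE : E → V) (K : Finset V)
    (hK : 2 ≤ K.card) (X : E → Bool) :
    (∃ S : V → Bool, satPsi uE vE K X S) ↔ ¬ safe uE vE K X :=
  stmt0_general uE vE K X
end

section
/- For the gadget graph G_q built from the binary expansion q = Σ_{k=1}^{m} b_k 2^{−k}: the number of edge-state vectors X : {1,…,m} → Bool for which v_0 and v_{z_m+1} are X-connected equals q · 2^m = Σ_{k=1}^{m} b_k 2^{m−k} (equivalently, when each edge works with probability 1/2 independently, the two-terminal reliability of G_q equals q); moreover |V| + |E| = z_m + 2 + m. -/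
/-- `z_k`: the number of zeros among the first `k` bits `b_1, …, b_k`
(so `zfun b 0 = 0`). -/
def zfun (b : ℕ → Bool) (k : ℕ) : ℕ :=
  k - ∑ i ∈ Finset.Icc 1 k, (if b i then 1 else 0)

/-! The terminals are joined iff some one-edge `k` works together with all zero-edges before it:
those zero-edges lead along the path from `v_0` to `v_{z_{k-1}}`, and otherwise the cut below the
first failed zero-edge separates `v_0` from the top terminal. Taking the least such `k`, this says
that the first position where `X` agrees with `b` carries a one-bit. The states whose first
agreement is at `k` form a cylinder with `2^{m-k}` elements, so they number `Σ b_k 2^{m-k}`. -/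

open Finset

theorem sum_bits_le (b : ℕ → Bool) (k : ℕ) :
    ∑ i ∈ Icc 1 k, (if b i then 1 else 0) ≤ k := by
  rw [sum_boole]
  simpa using card_filter_le (Icc 1 k) (fun i => b i = true)

@[simp]
theorem zfun_zero (b : ℕ → Bool) : zfun b 0 = 0 := by simp [zfun]

theorem zfun_succ (b : ℕ → Bool) (k : ℕ) :
    zfun b (k + 1) = zfun b k + if b (k + 1) then 0 else 1 := by
  have hle := sum_bits_le b k
  unfold zfun
  rw [sum_Icc_succ_top (by omega)]
  split_ifs <;> omega

theorem zfun_mono (b : ℕ → Bool) : Monotone (zfun b) :=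
  monotone_nat_of_le_succ fun k => by rw [zfun_succ]; omega

theorem zfun_lt_of_lt {b : ℕ → Bool} {t k : ℕ} (htk : t < k) (hb : b (t + 1) = false) :
    zfun b t < zfun b k :=
  calc zfun b t < zfun b (t + 1) := by simp [zfun_succ, hb]
    _ ≤ zfun b k := zfun_mono b htk

theorem xConnected.iff_of_forall {V E : Type*} {uE vE : E → V} {X : E → Bool} (p : V → Prop)
    (hp : ∀ e, X e = true → (p (uE e) ↔ p (vE e))) {a c : V} (h : xConnected uE vE X a c) :
    p a ↔ p c := by
  induction h with
  | refl => rfl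
  | tail _ hstep ih =>
    obtain ⟨e, he, ⟨rfl, rfl⟩ | ⟨rfl, rfl⟩⟩ := hstep
    exacts [ih.trans (hp e he), ih.trans (hp e he).symm]

section FirstAgreement

variable {m : ℕ}

def IsFirstAgreement (c X : Fin m → Bool) (t : Fin m) : Prop :=
  X t = c t ∧ ∀ f < t, X f = !c f

instance (c X : Fin m → Bool) (t : Fin m) : Decidable (IsFirstAgreement c X t) :=
  instDecidableAnd

theorem IsFirstAgreement.unique {c X : Fin m → Bool} {s t : Fin m}
    (hs : IsFirstAgreement c X s) (ht : IsFirstAgreement c X t) : s = t := by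
  by_contra hne
  rcases lt_or_gt_of_ne hne with h | h
  · simpa [hs.1] using ht.2 s h
  · simpa [ht.1] using hs.2 t h

theorem card_isFirstAgreement (c : Fin m → Bool) (t : Fin m) :
    #{X | IsFirstAgreement c X t} = 2 ^ (m - 1 - t) := by
  have hset : ({X | IsFirstAgreement c X t} : Finset (Fin m → Bool)) =
      Fintype.piFinset fun f => if t < f then univ else {if f = t then c t else !c f} := by
    ext X
    rw [mem_filter_univ, Fintype.mem_piFinset]
    constructor
    · rintro ⟨hXt, hlt⟩ f
      rcases lt_trichotomy f t with h | rfl | h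
      · simp [h.not_gt, h.ne, hlt f h]
      · simp [hXt]
      · simp [h]
    · intro hX
      refine ⟨by simpa using hX t, fun f hf => by simpa [hf.not_gt, hf.ne] using hX f⟩
  rw [hset, Fintype.card_piFinset]
  simp only [apply_ite card, card_univ, card_singleton, Fintype.card_bool]
  rw [prod_ite, prod_const_one, mul_one, prod_const, filter_lt_eq_Ioi, Fin.card_Ioi]

theorem card_exists_isFirstAgreement (c : Fin m → Bool) :
    #{X | ∃ t, c t = true ∧ IsFirstAgreement c X t} =
      ∑ t, if c t then 2 ^ (m - 1 - t) else 0 := by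
  have hset : ({X | ∃ t, c t = true ∧ IsFirstAgreement c X t} : Finset (Fin m → Bool)) =
      ({t | c t = true} : Finset (Fin m)).biUnion fun t => {X | IsFirstAgreement c X t} := by
    ext X
    simp
  rw [hset, card_biUnion, sum_filter]
  · simp only [card_isFirstAgreement]
  · intro s _ t _ hst
    simp only [Function.onFun, disjoint_left, mem_filter_univ]
    exact fun _ hs ht => hst (hs.unique ht)

theorem exists_isFirstAgreement_of_exists {c X : Fin m → Bool}
    (h : ∃ e, c e = true ∧ X e = true ∧ ∀ f < e, c f = false → X f = true) :
    ∃ t, c t = true ∧ IsFirstAgreement c X t := by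
  obtain ⟨e, hce, hXe, hzero⟩ := h
  induction e using WellFoundedLT.induction with
  | _ e ih =>
    by_cases hfirst : ∀ f < e, X f = !c f
    · exact ⟨e, hce, hXe.trans hce.symm, hfirst⟩
    push Not at hfirst
    obtain ⟨f, hfe, hXf⟩ := hfirst
    have hcf : c f = true := by
      by_contra hcf
      simp_all
    exact ih f hfe hcf (by simpa [hcf] using hXf) fun g hg => hzero g (hg.trans hfe)

end FirstAgreement

theorem sum_Icc_one_eq_sum_fin {M : Type*} [AddCommMonoid M] (m : ℕ) (g : ℕ → M) :
    ∑ k ∈ Icc 1 m, g k = ∑ t : Fin m, g (t + 1) := by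
  rw [Fin.sum_univ_eq_sum_range (fun t => g (t + 1)), range_eq_Ico, sum_Ico_add' g 0 m 1]
  rfl

section Gadget

variable {m : ℕ} {b : ℕ → Bool} {X : Fin m → Bool}

/-- Vertex `v_i` is the natural number `i`, and edge `e : Fin m` is the paper's edge `k = e + 1`. -/
def gadgetSource (b : ℕ → Bool) (e : Fin m) : ℕ := zfun b e.val

def gadgetTarget (m : ℕ) (b : ℕ → Bool) (e : Fin m) : ℕ :=
  if b (e.val + 1) then zfun b m + 1 else zfun b (e.val + 1)

def GadgetConnected (m : ℕ) (b : ℕ → Bool) (X : Fin m → Bool) : Prop :=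
  xConnected (gadgetSource b) (gadgetTarget m b) X 0 (zfun b m + 1)

theorem xConnected_gadget_zfun {t : ℕ} (ht : t ≤ m)
    (hzero : ∀ f : Fin m, f.val < t → b (f.val + 1) = false → X f = true) :
    xConnected (gadgetSource b) (gadgetTarget m b) X 0 (zfun b t) := by
  induction t with
  | zero => rw [zfun_zero]; exact Relation.ReflTransGen.refl
  | succ n ih =>
    have hn := ih (by omega) fun f hf => hzero f (by omega)
    cases hb : b (n + 1)
    · exact hn.tail ⟨⟨n, ht⟩, hzero ⟨n, ht⟩ (by simp) hb, Or.inl ⟨rfl, by simp [gadgetTarget, hb]⟩⟩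
    · simpa [zfun_succ, hb] using hn

theorem gadgetConnected_of_witness {e : Fin m} (hb : b (e.val + 1) = true) (hX : X e = true)
    (hzero : ∀ f < e, b (f.val + 1) = false → X f = true) : GadgetConnected m b X :=
  (xConnected_gadget_zfun e.isLt.le hzero).tail
    ⟨e, hX, Or.inl ⟨rfl, by simp [gadgetTarget, hb]⟩⟩

/-- The cut `{v | v ≤ z_t}`: no operational edge crosses it. -/
theorem not_gadgetConnected_of_cut {t : ℕ}
    (ht : t = m ∨ ∃ h : t < m, b (t + 1) = false ∧ X ⟨t, h⟩ = false)
    (hone : ∀ e : Fin m, b (e.val + 1) = true → X e = true → t < e.val) :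
    ¬ GadgetConnected m b X := by
  have htm : t ≤ m := by rcases ht with rfl | ⟨h, -⟩ <;> omega
  have hgap : ∀ k ≤ m, t < k → zfun b t < zfun b k := by
    rcases ht with rfl | ⟨-, hb, -⟩
    · omega
    · exact fun k _ => (zfun_lt_of_lt · hb)
  intro hconn
  have hside := xConnected.iff_of_forall (· ≤ zfun b t) ?_ hconn
  · have := zfun_mono b htm
    simp only [zero_le, true_iff] at hside
    omega
  intro e he
  simp only [gadgetSource, gadgetTarget]
  cases hb : b (e.val + 1)
  · simp only [Bool.false_eq_true, if_false]
    rcases lt_trichotomy e.val t with hlt | heq | hgt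
    · simp [zfun_mono b hlt.le, zfun_mono b hlt]
    · rcases ht with rfl | ⟨h, -, hX⟩
      · omega
      · obtain rfl : e = ⟨t, h⟩ := Fin.ext heq
        simp [hX] at he
    · have h1 := hgap e.val e.isLt.le hgt
      have h2 := hgap (e.val + 1) e.isLt (by omega)
      exact iff_of_false (not_le.2 h1) (not_le.2 h2)
  · have h1 := hgap e.val e.isLt.le (hone e hb he)
    have := zfun_mono b htm
    simp only [if_true]
    exact iff_of_false (not_le.2 h1) (by omega)

theorem exists_witness_of_gadgetConnected (h : GadgetConnected m b X) :
    ∃ e, b (e.val + 1) = true ∧ X e = true ∧ ∀ f < e, b (f.val + 1) = false → X f = true := by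
  classical
  by_contra hw
  push Not at hw
  have hcut : ∃ t, t = m ∨ ∃ h : t < m, b (t + 1) = false ∧ X ⟨t, h⟩ = false := ⟨m, Or.inl rfl⟩
  refine not_gadgetConnected_of_cut (Nat.find_spec hcut) (fun e hb hX => ?_) h
  obtain ⟨f, hfe, hbf, hXf⟩ := hw e hb hX
  exact (Nat.find_min' hcut (Or.inr ⟨f.isLt, hbf, by simpa using hXf⟩)).trans_lt hfe

theorem gadgetConnected_iff :
    GadgetConnected m b X ↔ ∃ t, b (t.val + 1) = true ∧
      IsFirstAgreement (fun f : Fin m => b (f.val + 1)) X t := by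
  refine ⟨fun h => exists_isFirstAgreement_of_exists (exists_witness_of_gadgetConnected h), ?_⟩
  rintro ⟨t, hb, hXt, hbefore⟩
  exact gadgetConnected_of_witness hb (hXt.trans hb) fun f hf hbf => by simpa [hbf] using hbefore f hf

theorem card_gadgetConnected (m : ℕ) (b : ℕ → Bool) :
    Nat.card {X // GadgetConnected m b X} = ∑ k ∈ Icc 1 m, if b k then 2 ^ (m - k) else 0 := by
  classical
  rw [Nat.card_eq_fintype_card, Fintype.card_subtype]
  simp_rw [gadgetConnected_iff]
  rw [card_exists_isFirstAgreement, sum_Icc_one_eq_sum_fin]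
  simp only [Nat.sub_sub, Nat.add_comm 1]

end Gadget

theorem stmt3_general (m : ℕ) (b : ℕ → Bool) (q : ℝ)
    (hq : q = ∑ k ∈ Finset.Icc 1 m, (if b k then ((1 : ℝ)/2) ^ k else 0)) :
    (Nat.card {X : Fin m → Bool //
        xConnected (fun e : Fin m => zfun b e.val)
          (fun e : Fin m => if b (e.val + 1) then zfun b m + 1 else zfun b (e.val + 1))
          X 0 (zfun b m + 1)} : ℝ) = q * 2 ^ m ∧
    Nat.card {X : Fin m → Bool //
        xConnected (fun e : Fin m => zfun b e.val)
          (fun e : Fin m => if b (e.val + 1) then zfun b m + 1 else zfun b (e.val + 1))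
          X 0 (zfun b m + 1)}
      = ∑ k ∈ Finset.Icc 1 m, (if b k then 2 ^ (m - k) else 0) ∧
    (Finset.range (zfun b m + 2)).card + Fintype.card (Fin m) = zfun b m + 2 + m := by
  have hcount := card_gadgetConnected m b
  refine ⟨(congrArg (Nat.cast : ℕ → ℝ) hcount).trans ?_, hcount, by simp⟩
  rw [hq, sum_mul]
  push_cast
  refine sum_congr rfl fun k hk => ?_
  split_ifs
  · rw [pow_sub₀ _ two_ne_zero (mem_Icc.1 hk).2, one_div_pow, one_div, mul_comm]
  · rw [zero_mul]

/-- for the gadget graph `G_q` built from the binary expansion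
`q = Σ_{k=1}^m b_k 2^{-k}` (vertices `v_0, …, v_{z_m+1}` identified with the naturals
`0, …, z_m + 1`; edge `k ∈ {1, …, m}` has endpoints `(v_{z_{k-1}}, v_{z_k})` if
`b_k = 0` and `(v_{z_{k-1}}, v_{z_m+1})` if `b_k = 1`), the number of edge-state
vectors `X` for which `v_0` and `v_{z_m+1}` are `X`-connected equals
`q · 2^m = Σ_{k=1}^m b_k 2^{m-k}`; moreover `|V| + |E| = z_m + 2 + m`. -/
theorem stmt3 (m : ℕ) (hm : 0 < m) (b : ℕ → Bool) (q : ℝ)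
    (hq : q = ∑ k ∈ Finset.Icc 1 m, (if b k then ((1 : ℝ)/2) ^ k else 0))
    (hq0 : 0 < q) (hq1 : q < 1) :
    (Nat.card {X : Fin m → Bool //
        xConnected (fun e : Fin m => zfun b e.val)
          (fun e : Fin m => if b (e.val + 1) then zfun b m + 1 else zfun b (e.val + 1))
          X 0 (zfun b m + 1)} : ℝ) = q * 2 ^ m ∧
    Nat.card {X : Fin m → Bool //
        xConnected (fun e : Fin m => zfun b e.val)
          (fun e : Fin m => if b (e.val + 1) then zfun b m + 1 else zfun b (e.val + 1))
          X 0 (zfun b m + 1)}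
      = ∑ k ∈ Finset.Icc 1 m, (if b k then 2 ^ (m - k) else 0) ∧
    (Finset.range (zfun b m + 2)).card + Fintype.card (Fin m) = zfun b m + 2 + m :=
  stmt3_general m b q hq
end

section
/- Replacing every edge of G by its reliability-preserving gadget leaves the K-terminal unreliability unchanged with all edge failure probabilities set to 1/2: u_G(P) = u_{G′}(P_{1/2}) = |Ω_f(G′)| / 2^M, where M = |E′| = Σ_{e∈E} m_e. -/
open scoped Classical in
/-- The `K`-terminal unreliability of the graph with edge failure probabilities `p`:
`u_G(P) = Σ_X (1 − Φ(X)) · ∏_e p_e^(1−[X e]) (1 − p_e)^[X e]`. -/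
noncomputable def unrel {V E : Type*} [Fintype E] [DecidableEq E]
    (uE vE : E → V) (K : Finset V) (p : E → ℝ) : ℝ :=
  ∑ X : E → Bool, (if safe uE vE K X then (0 : ℝ) else 1) *
    ∏ e : E, p e ^ (if X e then 0 else 1) * (1 - p e) ^ (if X e then 1 else 0)

/-- `z^e_k`: the number of zeros among the first `k` bits `b^e_1, …, b^e_k` of the
binary expansion attached to edge `e` (so `gz be e 0 = 0`). -/
def gz {E : Type*} (be : E → ℕ → Bool) (e : E) (k : ℕ) : ℕ :=
  k - ∑ i ∈ Finset.Icc 1 k, (if be e i then 1 else 0)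

/-- Vertices of the transformed graph `G′`: the original vertices together with the
fresh interior gadget vertices `v_1, …, v_{z_{m_e}}` (distinct across gadgets). -/
abbrev Vtrans (V E : Type*) (be : E → ℕ → Bool) (me : E → ℕ) : Type _ :=
  V ⊕ (Σ e : E, Fin (gz be e (me e)))

/-- The gadget vertex `v_j` of the gadget replacing edge `e`, as a vertex of `G′`:
`v_0` is identified with the endpoint `uE e`, `v_{z_{m_e}+1}` with the endpoint
`vE e`, and `v_1, …, v_{z_{m_e}}` are fresh interior vertices. -/
def gadgetVertex {V E : Type*} (uE vE : E → V) (be : E → ℕ → Bool) (me : E → ℕ)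
    (e : E) (j : ℕ) : Vtrans V E be me :=
  if j = 0 then Sum.inl (uE e)
  else if j = gz be e (me e) + 1 then Sum.inl (vE e)
  else if h : j - 1 < gz be e (me e) then Sum.inr ⟨e, ⟨j - 1, h⟩⟩
  else Sum.inl (uE e)

/-- First endpoint of edge `(e, k)` of `G′` (the edge for bit `k+1` of the gadget
replacing `e`): the gadget vertex `v_{z_k}`. -/
def uTrans {V E : Type*} (uE vE : E → V) (be : E → ℕ → Bool) (me : E → ℕ) :
    (Σ e : E, Fin (me e)) → Vtrans V E be me :=
  fun ek => gadgetVertex uE vE be me ek.1 (gz be ek.1 ek.2.val)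

/-- Second endpoint of edge `(e, k)` of `G′`: the gadget vertex `v_{z_m+1}` if bit
`k+1` is one, and `v_{z_{k+1}}` otherwise. -/
def vTrans {V E : Type*} (uE vE : E → V) (be : E → ℕ → Bool) (me : E → ℕ) :
    (Σ e : E, Fin (me e)) → Vtrans V E be me :=
  fun ek =>
    if be ek.1 (ek.2.val + 1) then gadgetVertex uE vE be me ek.1 (gz be ek.1 (me ek.1) + 1)
    else gadgetVertex uE vE be me ek.1 (gz be ek.1 (ek.2.val + 1))

/-!
The edges with bit `0` of a gadget form a chain `v_0 — v_1 — ⋯ — v_{z_m}` starting at the first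
terminal, and each edge with bit `1` leads from the current end of the chain to the second
terminal. So the gadget joins its terminals exactly when, for some `k` with `b_k = 1`, edge `k` is
up together with all earlier edges of the chain; for uniformly random edge states this happens
with probability `Σ_k b_k 2^{-k} = 1 - p_e`. Collapsing every gadget to a single edge, up iff the
gadget joins its terminals, therefore carries the uniform distribution on the states of `G′` to
the distribution `P` on the states of `G`, and it preserves safety. For the harder half of the
last claim: if a gadget does not join its terminals, the first edge of its chain that is down cuts
it into a part attached to each terminal, and extending a connected component of `G` across the
gadgets along these cuts gives a set of vertices of `G′` closed under its operational edges.
-/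

open Finset

section GadgetIndices

variable {E : Type*} (be : E → ℕ → Bool) (e : E)

@[simp]
lemma gz_zero : gz be e 0 = 0 := by
  simp [gz]

lemma gz_succ (k : ℕ) : gz be e (k + 1) = gz be e k + if be e (k + 1) then 0 else 1 := by
  have hones : ∑ i ∈ Icc 1 k, (if be e i then 1 else 0) ≤ k :=
    (sum_le_card_nsmul _ _ 1 fun i _ => by split <;> omega).trans (by simp)
  simp only [gz, sum_Icc_succ_top (Nat.le_add_left 1 k)]
  split <;> omega

lemma gz_mono : Monotone (gz be e) :=
  monotone_nat_of_le_succ fun k => by rw [gz_succ]; omega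

def gadgetEnd (m k : ℕ) : ℕ :=
  if be e (k + 1) then gz be e m + 1 else gz be e (k + 1)

lemma gz_le_gadgetEnd {m k : ℕ} (hk : k < m) :
    gz be e k ≤ gadgetEnd be e m k := by
  unfold gadgetEnd
  split
  · exact (gz_mono be e hk.le).trans (Nat.le_succ _)
  · exact gz_mono be e (Nat.le_succ k)

lemma gadgetEnd_le {m k : ℕ} (hk : k < m) :
    gadgetEnd be e m k ≤ gz be e m + 1 := by
  unfold gadgetEnd
  split
  · exact le_rfl
  · exact (gz_mono be e hk).trans (Nat.le_succ _)

end GadgetIndices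

/-- The gadget with bits `b 1, …, b m` joins its terminals in the edge state `x`; edge `k`
carries bit `b (k + 1)`. -/
def GadgetConnects (b : ℕ → Bool) {m : ℕ} (x : Fin m → Bool) : Prop :=
  ∃ k : Fin m, b (k + 1) = true ∧ x k = true ∧ ∀ j < k, b (j + 1) = false → x j = true

instance (b : ℕ → Bool) {m : ℕ} : DecidablePred (GadgetConnects b (m := m)) :=
  fun _ => by unfold GadgetConnects; infer_instance

lemma gadgetConnects_cons (b : ℕ → Bool) {m : ℕ} (h : Bool) (t : Fin m → Bool) :
    GadgetConnects b (Fin.cons h t : Fin (m + 1) → Bool) ↔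
      if b 1 then h = true ∨ GadgetConnects (fun n => b (n + 1)) t
      else h = true ∧ GadgetConnects (fun n => b (n + 1)) t := by
  simp only [GadgetConnects, Fin.exists_fin_succ, Fin.forall_fin_succ, Fin.cons_zero, Fin.cons_succ,
    Fin.val_zero, Fin.val_succ, Fin.succ_lt_succ_iff, Fin.not_lt_zero, Fin.succ_pos]
  cases b 1 <;> cases h <;> simp

lemma card_gadgetConnects_succ (b : ℕ → Bool) (m : ℕ) :
    #{x : Fin (m + 1) → Bool | GadgetConnects b x} =
      (if b 1 then 2 ^ m else 0) + #{t : Fin m → Bool | GadgetConnects (fun n => b (n + 1)) t} := by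
  have hsplit : ∀ t : Fin m → Bool,
      (if GadgetConnects b (Fin.cons true t : Fin (m + 1) → Bool) then 1 else 0) +
        (if GadgetConnects b (Fin.cons false t : Fin (m + 1) → Bool) then 1 else 0) =
      (if b 1 then 1 else 0) + if GadgetConnects (fun n => b (n + 1)) t then 1 else 0 := by
    intro t
    simp only [gadgetConnects_cons]
    cases b 1 <;> simp
  rw [card_filter, card_filter, ← Fintype.sum_equiv (Fin.consEquiv fun _ => Bool)
    (fun p => if GadgetConnects b (Fin.cons p.1 p.2 : Fin (m + 1) → Bool) then 1 else 0) _
    fun _ => rfl, Fintype.sum_prod_type, Fintype.sum_bool, ← sum_add_distrib]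
  simp only [hsplit, sum_add_distrib]
  cases b 1 <;> simp

lemma card_gadgetConnects_div (b : ℕ → Bool) (m : ℕ) :
    (#{x : Fin m → Bool | GadgetConnects b x} : ℝ) / 2 ^ m =
      ∑ k ∈ range m, if b (k + 1) then (1 / 2 : ℝ) ^ (k + 1) else 0 := by
  induction m generalizing b with
  | zero => simp [GadgetConnects]
  | succ m ih =>
    have hshift : ∑ k ∈ range m, (if b (k + 1 + 1) then (1 / 2 : ℝ) ^ (k + 1 + 1) else 0) =
        (∑ k ∈ range m, if b (k + 1 + 1) then (1 / 2 : ℝ) ^ (k + 1) else 0) / 2 := by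
      rw [sum_div]
      exact sum_congr rfl fun k _ => by split <;> ring
    rw [card_gadgetConnects_succ, sum_range_succ', hshift, ← ih fun n => b (n + 1)]
    split_ifs <;> push_cast <;> field_simp <;> ring

lemma sum_filter_gadgetConnects (b : ℕ → Bool) (m : ℕ) (p : ℝ)
    (hp : 1 - p = ∑ k ∈ Icc 1 m, if b k then (1 / 2 : ℝ) ^ k else 0) (y : Bool) :
    ∑ _x ∈ {x : Fin m → Bool | decide (GadgetConnects b x) = y}, (1 / 2 : ℝ) ^ m =
      if y then 1 - p else p := by
  have hconn : (#{x : Fin m → Bool | GadgetConnects b x} : ℝ) / 2 ^ m = 1 - p := by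
    rw [card_gadgetConnects_div, hp, ← Ico_add_one_right_eq_Icc, sum_Ico_eq_sum_range]
    simp only [add_tsub_cancel_right, add_comm 1]
  have hcompl : (#{x : Fin m → Bool | GadgetConnects b x} : ℝ) +
      #{x : Fin m → Bool | ¬ GadgetConnects b x} = 2 ^ m := by
    rw [← Nat.cast_add, card_filter_add_card_filter_not]
    simp
  rw [sum_const, nsmul_eq_mul, div_pow, one_pow, mul_one_div]
  cases y
  · simp only [decide_eq_false_iff_not, Bool.false_eq_true, if_false]
    field_simp at hconn ⊢
    linarith
  · simpa using hconn

/-- No operational edge of a gadget that does not join its terminals crosses the cut between the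
gadget vertices numbered at most `c` and the others. -/
lemma exists_gadgetCut {E : Type*} (be : E → ℕ → Bool) (e : E) {m : ℕ} (x : Fin m → Bool)
    (hx : ¬ GadgetConnects (be e) x) :
    ∃ c ≤ gz be e m, ∀ k : Fin m, x k = true → (gz be e k ≤ c ↔ gadgetEnd be e m k ≤ c) := by
  classical
  -- `n` is the first edge of the chain `v_0 — v_1 — ⋯` that is down, or `m`
  have hex : ∃ n, n = m ∨ ∃ k : Fin m, ↑k = n ∧ be e (n + 1) = false ∧ x k = false :=
    ⟨m, Or.inl rfl⟩
  have hle := Nat.find_min' hex (Or.inl rfl)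
  have hfirst := Nat.find_spec hex
  have hmin : ∀ j < Nat.find hex,
      ¬ (j = m ∨ ∃ k : Fin m, ↑k = j ∧ be e (j + 1) = false ∧ x k = false) :=
    fun _ => Nat.find_min hex
  generalize Nat.find hex = n at hle hfirst hmin
  refine ⟨gz be e n, gz_mono be e hle, fun k hk => ?_⟩
  by_cases hkn : ↑k < n
  · have hbk : be e (k + 1) = false := by
      by_contra hbk
      refine hx ⟨k, by simpa using hbk, hk, fun j hj hbj => ?_⟩
      by_contra hxj
      exact hmin j (lt_trans hj hkn) (Or.inr ⟨j, rfl, hbj, by simpa using hxj⟩)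
    have hend : gadgetEnd be e m k ≤ gz be e n := by
      simpa [gadgetEnd, hbk] using gz_mono be e (Nat.succ_le_of_lt hkn)
    exact iff_of_true ((gz_le_gadgetEnd be e k.isLt).trans hend) hend
  · obtain hnm | ⟨j, hjn, hbn, hxj⟩ := hfirst
    · omega
    have hjk : j ≠ k := fun hjk => by simp [hjk, hk] at hxj
    have hlt : n < k := lt_of_le_of_ne (not_lt.mp hkn) fun h => hjk (Fin.ext (hjn.trans h))
    have hgap : gz be e n < gz be e k := by
      have hsucc : gz be e (n + 1) = gz be e n + 1 := by simp [gz_succ, hbn]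
      exact Nat.lt_of_succ_le (hsucc.symm.trans_le (gz_mono be e (Nat.succ_le_of_lt hlt)))
    exact iff_of_false (not_le.mpr hgap)
      (not_le.mpr (hgap.trans_le (gz_le_gadgetEnd be e k.isLt)))

section Connectivity

variable {V E : Type*} {u v : E → V} {X : E → Bool} {a b : V}

lemma edgeStep.symm (h : edgeStep u v X a b) : edgeStep u v X b a :=
  let ⟨e, he, hends⟩ := h
  ⟨e, he, hends.symm⟩

lemma xConnected.symm (h : xConnected u v X a b) : xConnected u v X b a :=
  Relation.ReflTransGen.mono (fun _ _ => edgeStep.symm) _ _ (Relation.ReflTransGen.swap _ _ h)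

end Connectivity

section Transformed

variable {V E : Type*} (uE vE : E → V) (be : E → ℕ → Bool) (me : E → ℕ)

@[simp]
lemma gadgetVertex_zero (e : E) : gadgetVertex uE vE be me e 0 = Sum.inl (uE e) := by
  simp [gadgetVertex]

@[simp]
lemma gadgetVertex_top (e : E) :
    gadgetVertex uE vE be me e (gz be e (me e) + 1) = Sum.inl (vE e) := by
  simp [gadgetVertex]

lemma vTrans_eq (ek : Σ e : E, Fin (me e)) :
    vTrans uE vE be me ek = gadgetVertex uE vE be me ek.1 (gadgetEnd be ek.1 (me ek.1) ek.2) := by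
  unfold vTrans gadgetEnd
  split <;> rfl

def collapseState (X' : (Σ e : E, Fin (me e)) → Bool) (e : E) : Bool :=
  decide (GadgetConnects (be e) fun k => X' ⟨e, k⟩)

variable {uE vE be me} (X' : (Σ e : E, Fin (me e)) → Bool)

lemma xConnected_gadgetVertex_gz (e : E) {n : ℕ} (hn : n ≤ me e)
    (hon : ∀ j : Fin (me e), ↑j < n → be e (j + 1) = false → X' ⟨e, j⟩ = true) :
    xConnected (uTrans uE vE be me) (vTrans uE vE be me) X' (Sum.inl (uE e))
      (gadgetVertex uE vE be me e (gz be e n)) := by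
  induction n with
  | zero =>
    simp only [gz_zero, gadgetVertex_zero]
    exact Relation.ReflTransGen.refl
  | succ n ih =>
    have hpath := ih (Nat.le_of_succ_le hn) fun j hj => hon j (Nat.lt_succ_of_lt hj)
    cases hb : be e (n + 1)
    · refine hpath.tail ⟨⟨e, ⟨n, hn⟩⟩, hon ⟨n, hn⟩ (Nat.lt_succ_self n) hb, Or.inl ⟨rfl, ?_⟩⟩
      simp [vTrans_eq, gadgetEnd, hb]
    · simpa [gz_succ, hb] using hpath

lemma xConnected_of_gadgetConnects (e : E) (h : GadgetConnects (be e) fun k => X' ⟨e, k⟩) :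
    xConnected (uTrans uE vE be me) (vTrans uE vE be me) X' (Sum.inl (uE e)) (Sum.inl (vE e)) := by
  obtain ⟨k, hbk, hxk, hon⟩ := h
  refine (xConnected_gadgetVertex_gz X' e k.isLt.le fun j hj => hon j hj).tail
    ⟨⟨e, k⟩, hxk, Or.inl ⟨rfl, ?_⟩⟩
  simp [vTrans_eq, gadgetEnd, hbk]

lemma xConnected_uTrans_of_collapseState {a b : V}
    (h : xConnected uE vE (collapseState be me X') a b) :
    xConnected (uTrans uE vE be me) (vTrans uE vE be me) X' (Sum.inl a) (Sum.inl b) := by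
  refine Relation.ReflTransGen.lift' Sum.inl (fun x y hxy => ?_) _ _ h
  obtain ⟨e, he, hends⟩ := hxy
  have hpath := xConnected_of_gadgetConnects (uE := uE) (vE := vE) X' e
    (by simpa [collapseState] using he)
  rcases hends with ⟨rfl, rfl⟩ | ⟨rfl, rfl⟩
  exacts [hpath, hpath.symm]

variable (uE vE be me) in
def gadgetSide (C : V → Prop) (c : E → ℕ) : Vtrans V E be me → Prop
  | .inl v => C v
  | .inr ⟨e, i⟩ => if ↑i + 1 ≤ c e then C (uE e) else C (vE e)

lemma gadgetSide_gadgetVertex (C : V → Prop) {c : E → ℕ} {e : E} (hc : c e ≤ gz be e (me e))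
    {j : ℕ} (hj : j ≤ gz be e (me e) + 1) :
    gadgetSide uE vE be me C c (gadgetVertex uE vE be me e j) ↔
      if j ≤ c e then C (uE e) else C (vE e) := by
  unfold gadgetVertex
  split_ifs <;> simp_all [gadgetSide] <;> omega

lemma gadgetSide_iff_of_edgeStep (C : V → Prop) {c : E → ℕ} (hc : ∀ e, c e ≤ gz be e (me e))
    (hcut : ∀ e, collapseState be me X' e = false → ∀ k : Fin (me e), X' ⟨e, k⟩ = true →
      (gz be e k ≤ c e ↔ gadgetEnd be e (me e) k ≤ c e))
    (hC : ∀ e, collapseState be me X' e = true → (C (uE e) ↔ C (vE e)))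
    {w w' : Vtrans V E be me} (h : edgeStep (uTrans uE vE be me) (vTrans uE vE be me) X' w w') :
    gadgetSide uE vE be me C c w ↔ gadgetSide uE vE be me C c w' := by
  obtain ⟨⟨e, k⟩, hk, hends⟩ := h
  suffices gadgetSide uE vE be me C c (uTrans uE vE be me ⟨e, k⟩) ↔
      gadgetSide uE vE be me C c (vTrans uE vE be me ⟨e, k⟩) by
    rcases hends with ⟨rfl, rfl⟩ | ⟨rfl, rfl⟩
    exacts [this, this.symm]
  rw [uTrans, vTrans_eq, gadgetSide_gadgetVertex C (hc e)
      ((gz_mono be e k.isLt.le).trans (Nat.le_succ _)),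
    gadgetSide_gadgetVertex C (hc e) (gadgetEnd_le be e k.isLt)]
  cases he : collapseState be me X' e
  · simp only [hcut e he k hk]
  · have := hC e he
    split_ifs <;> tauto

lemma xConnected_collapseState_of_uTrans {a b : V}
    (h : xConnected (uTrans uE vE be me) (vTrans uE vE be me) X' (Sum.inl a) (Sum.inl b)) :
    xConnected uE vE (collapseState be me X') a b := by
  have hcuts (e : E) : ∃ c ≤ gz be e (me e), collapseState be me X' e = false →
      ∀ k : Fin (me e), X' ⟨e, k⟩ = true → (gz be e k ≤ c ↔ gadgetEnd be e (me e) k ≤ c) := by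
    by_cases he : collapseState be me X' e
    · exact ⟨0, Nat.zero_le _, by simp [he]⟩
    · obtain ⟨c, hc, hcut⟩ := exists_gadgetCut be e _ (by simpa [collapseState] using he)
      exact ⟨c, hc, fun _ => hcut⟩
  choose c hc hcut using hcuts
  set C := xConnected uE vE (collapseState be me X') a
  have hC (e : E) (he : collapseState be me X' e = true) : C (uE e) ↔ C (vE e) :=
    ⟨fun hu => hu.tail ⟨e, he, Or.inl ⟨rfl, rfl⟩⟩, fun hv => hv.tail ⟨e, he, Or.inr ⟨rfl, rfl⟩⟩⟩
  have hside (w) (hw : xConnected (uTrans uE vE be me) (vTrans uE vE be me) X' (Sum.inl a) w) :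
      gadgetSide uE vE be me C c w := by
    induction hw with
    | refl => exact Relation.ReflTransGen.refl
    | tail _ hstep ih => exact (gadgetSide_iff_of_edgeStep X' C hc hcut hC hstep).mp ih
  exact hside _ h

variable (uE vE) in
lemma safe_uTrans_iff (K : Finset V) [DecidableEq V] [DecidableEq E] :
    safe (uTrans uE vE be me) (vTrans uE vE be me) (K.image Sum.inl) X' ↔
      safe uE vE K (collapseState be me X') := by
  refine ⟨fun h a ha b hb => xConnected_collapseState_of_uTrans X'
    (h _ (mem_image_of_mem _ ha) _ (mem_image_of_mem _ hb)), fun h a' ha' b' hb' => ?_⟩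
  obtain ⟨a, ha, rfl⟩ := mem_image.mp ha'
  obtain ⟨b, hb, rfl⟩ := mem_image.mp hb'
  exact xConnected_uTrans_of_collapseState X' (h a ha b hb)

end Transformed

lemma sum_mul_prod_fiberwise {ι β R : Type*} {A : ι → Type*} [Fintype ι] [DecidableEq ι]
    [∀ i, Fintype (A i)] [Fintype β] [DecidableEq β] [CommSemiring R]
    (c : ∀ i, A i → β) (w : ∀ i, A i → R) (g : (ι → β) → R) :
    ∑ a : ∀ i, A i, g (fun i => c i (a i)) * ∏ i, w i (a i) =
      ∑ y : ι → β, g y * ∏ i, ∑ x ∈ {x | c i x = y i}, w i x := by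
  rw [← sum_fiberwise univ (fun a i => c i (a i))]
  refine sum_congr rfl fun y _ => ?_
  have hfiber : ({a | (fun i => c i (a i)) = y} : Finset (∀ i, A i)) =
      Fintype.piFinset fun i => {x | c i x = y i} := by
    ext a
    simp [funext_iff]
  rw [prod_univ_sum, mul_sum, hfiber]
  refine sum_congr rfl fun a ha => ?_
  congr
  ext i
  simpa using (Fintype.mem_piFinset.mp ha i)

open Classical in
lemma unrel_half {V E : Type*} [Fintype E] [DecidableEq E] (u v : E → V) (K : Finset V) :
    unrel u v K (fun _ => 1 / 2) =
      ∑ X : E → Bool, (if safe u v K X then (0 : ℝ) else 1) * (1 / 2) ^ Fintype.card E := by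
  refine sum_congr rfl fun X _ => ?_
  rw [← card_univ, ← prod_const]
  congr 1
  refine prod_congr rfl fun e _ => ?_
  cases X e <;> norm_num

lemma unrel_half_eq_card {V E : Type*} [Fintype E] [DecidableEq E] (u v : E → V) (K : Finset V) :
    unrel u v K (fun _ => 1 / 2) =
      (Nat.card {X : E → Bool // ¬ safe u v K X} : ℝ) / 2 ^ Fintype.card E := by
  classical
  rw [unrel_half, Nat.card_eq_fintype_card, Fintype.card_subtype, card_filter,
    Nat.cast_sum, sum_div]
  refine sum_congr rfl fun X _ => ?_
  split_ifs <;> simp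

open Classical in
lemma unrel_eq_sum_collapseState {V E : Type*} [Fintype E] [DecidableEq E]
    (uE vE : E → V) (K : Finset V) (p : E → ℝ) (me : E → ℕ) (be : E → ℕ → Bool)
    (hbits : ∀ e, 1 - p e
      = ∑ k ∈ Icc 1 (me e), (if be e k then ((1 : ℝ)/2) ^ k else 0)) :
    unrel uE vE K p = ∑ X' : (Σ e : E, Fin (me e)) → Bool,
      (if safe uE vE K (collapseState be me X') then (0 : ℝ) else 1) *
        (1 / 2) ^ ∑ e, me e := by
  have hfactor (Y : E → Bool) (e : E) :
      p e ^ (if Y e then 0 else 1) * (1 - p e) ^ (if Y e then 1 else 0) =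
        ∑ _x ∈ {x : Fin (me e) → Bool | decide (GadgetConnects (be e) x) = Y e},
          (1 / 2 : ℝ) ^ me e := by
    rw [sum_filter_gadgetConnects (be e) (me e) (p e) (hbits e)]
    cases Y e <;> simp
  simp only [unrel, hfactor]
  rw [← sum_mul_prod_fiberwise (fun e x => decide (GadgetConnects (be e) x))
    (fun e _ => (1 / 2 : ℝ) ^ me e), ← (Equiv.piCurry fun _ _ => Bool).sum_comp]
  simp only [prod_pow_eq_pow_sum]
  rfl

theorem stmt4_general {V E : Type*} [Fintype E] [DecidableEq V] [DecidableEq E]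
    (uE vE : E → V) (K : Finset V)
    (p : E → ℝ)
    (me : E → ℕ) (be : E → ℕ → Bool)
    (hbits : ∀ e, 1 - p e
      = ∑ k ∈ Finset.Icc 1 (me e), (if be e k then ((1 : ℝ)/2) ^ k else 0)) :
    unrel uE vE K p
        = unrel (uTrans uE vE be me) (vTrans uE vE be me) (K.image Sum.inl)
            (fun _ => 1/2) ∧
    unrel (uTrans uE vE be me) (vTrans uE vE be me) (K.image Sum.inl) (fun _ => 1/2)
        = (Nat.card {X : (Σ e : E, Fin (me e)) → Bool //
              ¬ safe (uTrans uE vE be me) (vTrans uE vE be me) (K.image Sum.inl) X} : ℝ)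
            / 2 ^ (∑ e : E, me e) := by
  have hcard : Fintype.card (Σ e : E, Fin (me e)) = ∑ e, me e := by simp
  constructor
  · rw [unrel_eq_sum_collapseState uE vE K p me be hbits, unrel_half, hcard]
    refine sum_congr rfl fun X' _ => ?_
    rw [safe_uTrans_iff]
  · rw [unrel_half_eq_card, hcard]

/-- replacing every edge of `G` by its reliability-preserving gadget
leaves the `K`-terminal unreliability unchanged with all edge failure probabilities
set to `1/2`: `u_G(P) = u_{G′}(P_{1/2}) = |Ω_f(G′)| / 2^M` with `M = |E′| = Σ_e m_e`. -/
theorem stmt4 {V E : Type*} [Fintype V] [Fintype E] [DecidableEq V] [DecidableEq E]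
    (uE vE : E → V) (K : Finset V) (hK : 2 ≤ K.card)
    (p : E → ℝ) (hp : ∀ e, p e ∈ Set.Ioo (0 : ℝ) 1)
    (me : E → ℕ) (be : E → ℕ → Bool)
    (hbits : ∀ e, 1 - p e
      = ∑ k ∈ Finset.Icc 1 (me e), (if be e k then ((1 : ℝ)/2) ^ k else 0)) :
    unrel uE vE K p
        = unrel (uTrans uE vE be me) (vTrans uE vE be me) (K.image Sum.inl)
            (fun _ => 1/2) ∧
    unrel (uTrans uE vE be me) (vTrans uE vE be me) (K.image Sum.inl) (fun _ => 1/2)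
        = (Nat.card {X : (Σ e : E, Fin (me e)) → Bool //
              ¬ safe (uTrans uE vE be me) (vTrans uE vE be me) (K.image Sum.inl) X} : ℝ)
            / 2 ^ (∑ e : E, me e) :=
  stmt4_general uE vE K p me be hbits
end

section
/- For every real s with 1/2 < s < 1 and every positive integer r, the lower binomial tail satisfies Σ_{i=0}^{⌊r/2⌋} C(r, i) s^i (1 − s)^{r−i} ≤ (4 s (1 − s))^{r/2}, where the right-hand side uses the real power with exponent r/2. -/
/-! For `i ≤ r/2` and `0 ≤ b ≤ a`, trading the surplus factors `b` for `√(ab) ≥ b` bounds each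
term `a^i b^(r-i)` by `√(ab)^r`; the binomial coefficients of the partial sum add up to at most
`2^r`, and `2^r √(ab)^r = (4ab)^(r/2)`. -/

open Finset

theorem Nat.sum_range_choose_le_two_pow {r k : ℕ} (hk : k ≤ r + 1) :
    ∑ i ∈ range k, r.choose i ≤ 2 ^ r :=
  (sum_le_sum_of_subset (range_subset_range.mpr hk)).trans_eq (Nat.sum_range_choose r)

theorem Real.pow_mul_pow_sub_le_sqrt_mul_pow {a b : ℝ} (hb : 0 ≤ b) (hba : b ≤ a) {i r : ℕ}
    (hi : 2 * i ≤ r) : a ^ i * b ^ (r - i) ≤ √(a * b) ^ r := by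
  have hab : 0 ≤ a * b := mul_nonneg (hb.trans hba) hb
  have hb_le : b ≤ √(a * b) := Real.le_sqrt_of_sq_le (by nlinarith)
  have hr : r = 2 * i + (r - 2 * i) := by omega
  calc a ^ i * b ^ (r - i) = (a * b) ^ i * b ^ (r - 2 * i) := by
        rw [show r - i = i + (r - 2 * i) by omega, pow_add, mul_pow]; ring
    _ ≤ (a * b) ^ i * √(a * b) ^ (r - 2 * i) := by gcongr
    _ = √(a * b) ^ r := by
        rw [hr, pow_add, pow_mul, Real.sq_sqrt hab, Nat.add_sub_cancel_left]

theorem Real.sum_range_choose_mul_pow_mul_pow_le {a b : ℝ} (hb : 0 ≤ b) (hba : b ≤ a) (r : ℕ) :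
    ∑ i ∈ range (r / 2 + 1), (r.choose i : ℝ) * a ^ i * b ^ (r - i)
      ≤ (4 * a * b) ^ ((r : ℝ) / 2) := by
  have hab : 0 ≤ a * b := mul_nonneg (hb.trans hba) hb
  calc ∑ i ∈ range (r / 2 + 1), (r.choose i : ℝ) * a ^ i * b ^ (r - i)
      ≤ ∑ i ∈ range (r / 2 + 1), (r.choose i : ℝ) * √(a * b) ^ r := by
        refine sum_le_sum fun i hi => ?_
        rw [mul_assoc]
        have hi : 2 * i ≤ r := by have := mem_range.mp hi; omega
        gcongr
        exact Real.pow_mul_pow_sub_le_sqrt_mul_pow hb hba hi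
    _ ≤ 2 ^ r * √(a * b) ^ r := by
        rw [← sum_mul]
        gcongr
        exact_mod_cast Nat.sum_range_choose_le_two_pow (by omega)
    _ = (4 * a * b) ^ ((r : ℝ) / 2) := by
        have hsqrt4 : √(4 : ℝ) = 2 := by
          rw [show (4 : ℝ) = 2 ^ 2 by norm_num, Real.sqrt_sq zero_le_two]
        rw [Real.rpow_div_two_eq_sqrt _ (by linarith), Real.rpow_natCast, mul_assoc,
          Real.sqrt_mul zero_le_four, hsqrt4, mul_pow]

theorem stmt9_general (s : ℝ) (hs0 : 1/2 < s) (hs1 : s < 1) (r : ℕ) :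
    ∑ i ∈ Finset.range (r / 2 + 1), (r.choose i : ℝ) * s ^ i * (1 - s) ^ (r - i)
      ≤ (4 * s * (1 - s)) ^ ((r : ℝ) / 2) := by
  simpa only [mul_assoc] using
    Real.sum_range_choose_mul_pow_mul_pow_le (a := s) (b := 1 - s) (by linarith) (by linarith) r

/-- for `1/2 < s < 1` and a positive integer `r`, the lower binomial
tail satisfies `Σ_{i=0}^{⌊r/2⌋} C(r,i) s^i (1−s)^{r−i} ≤ (4 s (1−s))^{r/2}`, where
the right-hand side is a real power. -/
theorem stmt9 (s : ℝ) (hs0 : 1/2 < s) (hs1 : s < 1) (r : ℕ) (hr : 0 < r) :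
    ∑ i ∈ Finset.range (r / 2 + 1), (r.choose i : ℝ) * s ^ i * (1 - s) ^ (r - i)
      ≤ (4 * s * (1 - s)) ^ ((r : ℝ) / 2) :=
  stmt9_general s hs0 hs1 r
end
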